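/- arXiv:1805.09415 — 2 statements merged into one kernel-verified Lean document; each statement's English description precedes it below -/
import Mathlib

section
/- Let (X_t) be a random process over the reals, and let T = inf{t : X_t ≤ 0}. Suppose (a) X_t ≥ 0 for all t ≤ T, and (b) there is δ > 0 such that X_t − E[X_{t+1} | X_0,…,X_t] ≥ δ for all t < T. Then E[T | X_0] ≤ X_0/δ. -/
/-!
With `τₙ = min n T`, the drift condition makes `Yₙ = X_{τₙ} + δ τₙ` a supermartingale for the
natural filtration: its increment `1_{n < T} (X_{n+1} - X_n + δ)` has nonpositive conditional
expectation because the event `{n < T}` is known at time `n`. As `X_{τₙ} ≥ 0`, this gives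
`δ E[τₙ | X₀] ≤ E[Yₙ | X₀] ≤ Y₀ = X₀`, and monotone convergence in `n`, under the regular
conditional distribution given `X₀`, bounds `E[T | X₀]`.
-/

open MeasureTheory ProbabilityTheory Filter
open scoped ENNReal NNReal

/-- The natural filtration of the process `X` up to time `t`:
the σ-algebra generated by `X 0, …, X t`. -/
noncomputable def natSigma {Ω : Type*} [MeasurableSpace Ω] (X : ℕ → Ω → ℝ) (t : ℕ) :
    MeasurableSpace Ω :=
  ⨆ s ∈ Finset.range (t + 1), MeasurableSpace.comap (X s) inferInstance

/-- The first-hitting time `T = inf {t : X t ≤ 0}` (equal to `⊤` if no such time exists). -/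
noncomputable def hitZero {Ω : Type*} (X : ℕ → Ω → ℝ) (ω : Ω) : ℕ∞ :=
  sInf ((fun n : ℕ => (n : ℕ∞)) '' {t : ℕ | X t ω ≤ 0})

section

variable {Ω : Type*}

lemma natSigma_eq_natural [MeasurableSpace Ω] {X : ℕ → Ω → ℝ}
    (hX : ∀ t, StronglyMeasurable (X t)) (t : ℕ) :
    natSigma X t = Filtration.natural X hX t := by
  simp [natSigma, Filtration.natural]

lemma comap_eq_natural_zero [MeasurableSpace Ω] {X : ℕ → Ω → ℝ}
    (hX : ∀ t, StronglyMeasurable (X t)) :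
    MeasurableSpace.comap (X 0) inferInstance = Filtration.natural X hX 0 := by
  simp [Filtration.natural]

lemma hitZero_eq_hittingAfter (X : ℕ → Ω → ℝ) : hitZero X = hittingAfter X (Set.Iic 0) 0 := by
  ext1 ω
  refine le_antisymm ?_ (le_sInf ?_)
  · cases h : hittingAfter X (Set.Iic 0) 0 ω with
    | top => exact le_top
    | coe k =>
      have hk := hittingAfter_mem_set_of_ne_top (h ▸ WithTop.coe_ne_top : _ ≠ ⊤)
      rw [h] at hk
      exact sInf_le ⟨k, hk, rfl⟩
  · rintro _ ⟨t, ht, rfl⟩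
    exact hittingAfter_le_of_mem (Nat.zero_le t) ht

section StoppedProcess

variable {β : Type*} {u : ℕ → Ω → β} {τ : Ω → ℕ∞}

lemma stoppedProcess_zero : stoppedProcess u τ 0 = u 0 :=
  funext fun _ => stoppedProcess_eq_of_le bot_le

lemma stoppedProcess_mem {s : Set β} {ω : Ω} (h : ∀ t : ℕ, (t : ℕ∞) ≤ τ ω → u t ω ∈ s)
    (n : ℕ) : stoppedProcess u τ n ω ∈ s := by
  rcases le_total (n : ℕ∞) (τ ω) with hn | hn
  · rw [stoppedProcess_eq_of_le hn]
    exact h n hn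
  · rw [stoppedProcess_eq_of_ge hn]
    lift τ ω to ℕ using ne_top_of_le_ne_top WithTop.coe_ne_top hn with k
    exact h k le_rfl

lemma stoppedProcess_add_one_sub [AddGroup β] (t : ℕ) :
    stoppedProcess u τ (t + 1) - stoppedProcess u τ t =
      {ω | (t : ℕ∞) < τ ω}.indicator (u (t + 1) - u t) := by
  ext ω
  by_cases h : (t : ℕ∞) < τ ω
  · rw [Pi.sub_apply, stoppedProcess_eq_of_le (Order.add_one_le_of_lt h),
      stoppedProcess_eq_of_le h.le, Set.indicator_of_mem (show ω ∈ {ω | (t : ℕ∞) < τ ω} from h)]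
    rfl
  · have h' : τ ω ≤ t := not_lt.1 h
    rw [Pi.sub_apply, stoppedProcess_eq_of_ge h',
      stoppedProcess_eq_of_ge (h'.trans (WithTop.coe_le_coe.2 t.le_succ)), sub_self,
      Set.indicator_of_notMem (show ω ∉ {ω | (t : ℕ∞) < τ ω} from h)]

lemma monotone_stoppedProcess_id :
    Monotone (stoppedProcess (fun (t : ℕ) (_ : Ω) => (t : ℝ)) τ) := fun _ b hab _ =>
  Nat.cast_le.2 (WithTop.untopA_mono (min_lt_of_left_lt (WithTop.coe_lt_top b)).ne
    (min_le_min_right _ (WithTop.coe_le_coe.2 hab)))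

lemma iSup_ofReal_stoppedProcess_id (ω : Ω) :
    ⨆ n : ℕ, ENNReal.ofReal (stoppedProcess (fun (t : ℕ) (_ : Ω) => (t : ℝ)) τ n ω) = τ ω := by
  have h : ∀ n : ℕ, ENNReal.ofReal (stoppedProcess (fun (t : ℕ) (_ : Ω) => (t : ℝ)) τ n ω) =
      min (n : ℝ≥0∞) (τ ω) := by
    intro n
    rcases le_total (n : ℕ∞) (τ ω) with hn | hn
    · rw [stoppedProcess_eq_of_le hn, min_eq_left (by exact_mod_cast ENat.toENNReal_le.2 hn)]
      simp
    · rw [stoppedProcess_eq_of_ge hn]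
      lift τ ω to ℕ using ne_top_of_le_ne_top WithTop.coe_ne_top hn with k
      simpa using WithTop.coe_le_coe.1 hn
  simp_rw [h, ← iSup_inf_eq, ENNReal.iSup_natCast, top_inf_eq]

end StoppedProcess

theorem ae_lintegral_condExpKernel_iSup_le {m mΩ : MeasurableSpace Ω} [StandardBorelSpace Ω]
    {μ : Measure Ω} [IsFiniteMeasure μ] (hm : m ≤ mΩ) {f : ℕ → Ω → ℝ} {g : Ω → ℝ}
    (hf_meas : ∀ n, Measurable (f n)) (hf_int : ∀ n, Integrable (f n) μ) (hf_nonneg : 0 ≤ f)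
    (hf_mono : Monotone f) (hfg : ∀ n, μ[f n | m] ≤ᵐ[μ] g) :
    ∀ᵐ ω ∂μ, ∫⁻ ω', ⨆ n, ENNReal.ofReal (f n ω') ∂(condExpKernel μ m ω) ≤
      ENNReal.ofReal (g ω) := by
  filter_upwards [ae_all_iff.2 hfg, ae_all_iff.2 fun n => (hf_int n).condExpKernel_ae (m := m),
    ae_all_iff.2 fun n => condExp_ae_eq_integral_condExpKernel hm (hf_int n)]
    with ω hfgω hintω hkerω
  rw [lintegral_iSup (fun n => (hf_meas n).ennreal_ofReal)
    fun a b hab ω' => ENNReal.ofReal_le_ofReal (hf_mono hab ω')]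
  refine iSup_le fun n => ?_
  rw [← ofReal_integral_eq_lintegral_ofReal (hintω n) (ae_of_all _ (hf_nonneg n)), ← hkerω n]
  exact ENNReal.ofReal_le_ofReal (hfgω n)

section Drift

variable {mΩ : MeasurableSpace Ω} {μ : Measure Ω} {ℱ : Filtration ℕ mΩ} {X : ℕ → Ω → ℝ}
  {T : Ω → ℕ∞} {δ : ℝ}

theorem supermartingale_stoppedProcess_of_drift [IsFiniteMeasure μ] (hX : StronglyAdapted ℱ X)
    (hXint : ∀ t, Integrable (X t) μ) (hT : IsStoppingTime ℱ T)
    (hdrift : ∀ t : ℕ, ∀ᵐ ω ∂μ, (t : ℕ∞) < T ω → δ ≤ X t ω - μ[X (t + 1) | ℱ t] ω) :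
    Supermartingale (stoppedProcess (fun t ω => X t ω + δ * t) T) ℱ μ := by
  set Z : ℕ → Ω → ℝ := fun t ω => X t ω + δ * t
  have hZ : StronglyAdapted ℱ Z := fun t => (hX t).add stronglyMeasurable_const
  have hZint : ∀ t, Integrable (Z t) μ := fun t => (hXint t).add (integrable_const _)
  refine supermartingale_of_condExp_sub_nonneg_nat (hZ.stoppedProcess_of_discrete hT)
    (integrable_stoppedProcess hT hZint) fun t => ?_
  have hA : MeasurableSet[ℱ t] {ω | (t : ℕ∞) < T ω} := hT.measurableSet_gt t
  have hincr : stoppedProcess Z T t - stoppedProcess Z T (t + 1) =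
      {ω | (t : ℕ∞) < T ω}.indicator (Z t - Z (t + 1)) := by
    rw [← neg_sub, stoppedProcess_add_one_sub, ← Set.indicator_neg', neg_sub]
  have hZsub : Z t - Z (t + 1) = X t - X (t + 1) - fun _ => δ := by
    ext ω
    simp only [Z, Pi.sub_apply]
    push_cast
    ring
  have hcond : μ[Z t - Z (t + 1) | ℱ t] =ᵐ[μ] X t - μ[X (t + 1) | ℱ t] - fun _ => δ := by
    rw [hZsub]
    filter_upwards [condExp_sub ((hXint t).sub (hXint (t + 1))) (integrable_const δ) (ℱ t),
      condExp_sub (hXint t) (hXint (t + 1)) (ℱ t)] with ω h₁ h₂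
    rw [h₁, Pi.sub_apply, h₂, condExp_const (ℱ.le t),
      condExp_of_stronglyMeasurable (ℱ.le t) (hX t) (hXint t)]
    rfl
  rw [hincr]
  filter_upwards [condExp_indicator ((hZint t).sub (hZint (t + 1))) hA, hcond, hdrift t]
    with ω hind hcondω hdriftω
  rw [Pi.zero_apply, hind]
  by_cases hω : (t : ℕ∞) < T ω
  · rw [Set.indicator_of_mem (show ω ∈ {ω | (t : ℕ∞) < T ω} from hω), hcondω]
    simpa using hdriftω hω
  · exact (Set.indicator_of_notMem (show ω ∉ {ω | (t : ℕ∞) < T ω} from hω) _).ge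

theorem condExp_stoppedProcess_id_le [IsFiniteMeasure μ] (hX : StronglyAdapted ℱ X)
    (hXint : ∀ t, Integrable (X t) μ) (hT : IsStoppingTime ℱ T) (hδ : 0 < δ)
    (hnonneg : ∀ t : ℕ, ∀ᵐ ω ∂μ, (t : ℕ∞) ≤ T ω → 0 ≤ X t ω)
    (hdrift : ∀ t : ℕ, ∀ᵐ ω ∂μ, (t : ℕ∞) < T ω → δ ≤ X t ω - μ[X (t + 1) | ℱ t] ω) (n : ℕ) :
    μ[stoppedProcess (fun (t : ℕ) (_ : Ω) => (t : ℝ)) T n | ℱ 0] ≤ᵐ[μ]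
      fun ω => X 0 ω / δ := by
  set S := stoppedProcess (fun (t : ℕ) (_ : Ω) => (t : ℝ)) T n
  set Y := stoppedProcess (fun t ω => X t ω + δ * t) T
  have hY := supermartingale_stoppedProcess_of_drift hX hXint hT hdrift
  have hSint : Integrable S μ := integrable_stoppedProcess hT (fun _ => integrable_const _) n
  have hδS : δ • S ≤ᵐ[μ] Y n := by
    filter_upwards [ae_all_iff.2 hnonneg] with ω hω
    have hXT : 0 ≤ stoppedProcess X T n ω := stoppedProcess_mem (u := X) (s := Set.Ici 0) hω n
    change δ * S ω ≤ stoppedProcess X T n ω + δ * S ω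
    linarith
  filter_upwards [condExp_mono (hSint.smul δ) (hY.integrable n) hδS, condExp_smul δ S (ℱ 0),
    hY.condExp_ae_le (Nat.zero_le n)] with ω h₁ h₂ h₃
  rw [le_div_iff₀ hδ, mul_comm]
  calc δ * μ[S | ℱ 0] ω = μ[δ • S | ℱ 0] ω := h₂.symm
    _ ≤ μ[Y n | ℱ 0] ω := h₁
    _ ≤ X 0 ω := by simpa [Y, stoppedProcess_zero] using h₃

theorem ae_lintegral_condExpKernel_le_of_drift [StandardBorelSpace Ω] [IsFiniteMeasure μ]
    (hX : StronglyAdapted ℱ X) (hXint : ∀ t, Integrable (X t) μ) (hT : IsStoppingTime ℱ T)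
    (hδ : 0 < δ) (hnonneg : ∀ t : ℕ, ∀ᵐ ω ∂μ, (t : ℕ∞) ≤ T ω → 0 ≤ X t ω)
    (hdrift : ∀ t : ℕ, ∀ᵐ ω ∂μ, (t : ℕ∞) < T ω → δ ≤ X t ω - μ[X (t + 1) | ℱ t] ω) :
    ∀ᵐ ω ∂μ, ∫⁻ ω', (T ω' : ℝ≥0∞) ∂(condExpKernel μ (ℱ 0) ω) ≤ ENNReal.ofReal (X 0 ω / δ) := by
  have htime : StronglyAdapted ℱ fun (t : ℕ) (_ : Ω) => (t : ℝ) :=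
    fun _ => stronglyMeasurable_const
  have h := ae_lintegral_condExpKernel_iSup_le (ℱ.le 0)
    (fun n => ((htime.stoppedProcess_of_discrete hT n).mono (ℱ.le n)).measurable)
    (integrable_stoppedProcess hT fun _ => integrable_const _) (fun _ _ => Nat.cast_nonneg _)
    monotone_stoppedProcess_id (condExp_stoppedProcess_id_le hX hXint hT hδ hnonneg hdrift)
  simpa only [iSup_ofReal_stoppedProcess_id] using h

end Drift

end

/-- **Upper Additive Drift, Unbounded.** -/
theorem upper_additive_drift_unbounded
    {Ω : Type*} [MeasurableSpace Ω] [StandardBorelSpace Ω]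
    (μ : Measure Ω) [IsProbabilityMeasure μ]
    (X : ℕ → Ω → ℝ) (hXmeas : ∀ t, Measurable (X t)) (hXint : ∀ t, Integrable (X t) μ)
    (T : Ω → ℕ∞) (hT : ∀ ω, T ω = hitZero X ω)
    (δ : ℝ) (hδ : 0 < δ)
    (hnonneg : ∀ t : ℕ, ∀ᵐ ω ∂μ, (t : ℕ∞) ≤ T ω → 0 ≤ X t ω)
    (hdrift : ∀ t : ℕ, ∀ᵐ ω ∂μ, (t : ℕ∞) < T ω →
      δ ≤ X t ω - (μ[X (t + 1) | natSigma X t]) ω) :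
    ∀ᵐ ω ∂μ,
      (∫⁻ ω', (T ω' : ℝ≥0∞) ∂(condExpKernel μ (MeasurableSpace.comap (X 0) inferInstance) ω))
        ≤ ENNReal.ofReal (X 0 ω / δ) := by
  have hXsm : ∀ t, StronglyMeasurable (X t) := fun t => (hXmeas t).stronglyMeasurable
  have hX := Filtration.stronglyAdapted_natural hXsm
  have hTstop : IsStoppingTime (Filtration.natural X hXsm) T := by
    rw [show T = hittingAfter X (Set.Iic 0) 0 from
      funext fun ω => (hT ω).trans (congrFun (hitZero_eq_hittingAfter X) ω)]
    exact hX.adapted.isStoppingTime_hittingAfter measurableSet_Iic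
  simp_rw [natSigma_eq_natural hXsm] at hdrift
  rw [comap_eq_natural_zero hXsm]
  exact ae_lintegral_condExpKernel_le_of_drift hX hXint hTstop hδ hnonneg hdrift
end

section
/- Let (X_t) be a random process over the reals, let x_min > 0, and let T = inf{t : X_t < x_min}. Suppose (a) X_0 ≥ x_min and X_t ≥ 0 for all t ≤ T, and (b) there is δ > 0 such that X_t − E[X_{t+1} | X_0,…,X_t] ≥ δ·X_t for all t < T. Then E[T | X_0] ≤ (1 + ln(X_0/x_min))/δ. -/
/-!
Take the potential `φ x = 1 + log (x / xmin)` for `x ≥ xmin` and `φ x = 0` below `xmin`. From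
`log u ≤ u - 1`, `1 - y / x ≤ φ x - φ y` whenever `x ≥ xmin` and `y ≥ 0`. Pulling the bounded
`natSigma X t`-measurable factor `1 / X t` out of the conditional expectation, the drift condition
makes `Z t = φ (X t) · 1{t < T}` decrease in conditional expectation by at least `δ · 1{t < T}`.
Conditioning on `X 0` and telescoping, `δ · ∑_{t < n} P(t < T | X 0) ≤ Z 0 ≤ φ (X 0)` for every
`n`, while `E[T | X 0] = ∑_t P(t < T | X 0)`.
-/

open MeasureTheory ProbabilityTheory Filter
open scoped ENNReal NNReal

noncomputable def logPotential (a x : ℝ) : ℝ :=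
  if x < a then 0 else 1 + Real.log (x / a)

section logPotential

variable {a : ℝ}

lemma logPotential_nonneg (ha : 0 < a) (x : ℝ) : 0 ≤ logPotential a x := by
  unfold logPotential
  split_ifs with hx
  · exact le_rfl
  · have := Real.log_nonneg ((one_le_div ha).2 (not_lt.1 hx))
    linarith

lemma logPotential_le_abs_div (ha : 0 < a) (x : ℝ) : logPotential a x ≤ |x| / a := by
  unfold logPotential
  split_ifs with hx
  · positivity
  · have hx' : 0 < x := ha.trans_le (not_lt.1 hx)
    have := Real.log_le_sub_one_of_pos (div_pos hx' ha)
    rw [abs_of_pos hx']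
    linarith

lemma measurable_logPotential (a : ℝ) : Measurable (logPotential a) :=
  Measurable.ite measurableSet_Iio measurable_const
    (measurable_const.add (Real.measurable_log.comp (measurable_id.div_const a)))

lemma one_sub_div_le_logPotential_sub (ha : 0 < a) {x y : ℝ} (hx : a ≤ x) (hy : 0 ≤ y) :
    1 - y / x ≤ logPotential a x - logPotential a y := by
  have hx0 : 0 < x := ha.trans_le hx
  unfold logPotential
  rw [if_neg (not_lt.2 hx)]
  split_ifs with hya
  · have := Real.log_nonneg ((one_le_div ha).2 hx)
    have : 0 ≤ y / x := div_nonneg hy hx0.le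
    linarith
  · have hy0 : 0 < y := ha.trans_le (not_lt.1 hya)
    have hlog := Real.log_le_sub_one_of_pos (div_pos hy0 hx0)
    rw [Real.log_div hy0.ne' hx0.ne'] at hlog
    rw [Real.log_div hx0.ne' ha.ne', Real.log_div hy0.ne' ha.ne']
    linarith

lemma ofReal_logPotential_div_le (x δ : ℝ) :
    ENNReal.ofReal (logPotential a x / δ) ≤ ENNReal.ofReal ((1 + Real.log (x / a)) / δ) := by
  unfold logPotential
  split_ifs
  · simp
  · exact le_rfl

end logPotential

lemma ENat.coe_lt_sInf_image_coe_iff {S : Set ℕ} {t : ℕ} :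
    (t : ℕ∞) < sInf ((↑) '' S) ↔ ∀ s ∈ S, t < s := by
  rw [← ENat.add_one_le_iff (ENat.natCast_ne_top t), le_sInf_iff, Set.forall_mem_image]
  norm_cast

lemma ENat.toENNReal_eq_tsum_indicator (n : ℕ∞) :
    (n : ℝ≥0∞) = ∑' t : ℕ, {m : ℕ∞ | (t : ℕ∞) < m}.indicator 1 n := by
  cases n with
  | top => simp
  | coe n =>
    rw [tsum_eq_sum (s := Finset.range n) (fun t ht => by simpa using ht),
      Finset.sum_congr rfl fun t ht => (by simp [Finset.mem_range.1 ht] : _ = (1 : ℝ≥0∞))]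
    simp

lemma lintegral_toENNReal_eq_tsum_measure {Ω : Type*} [MeasurableSpace Ω] (ν : Measure Ω)
    {f : Ω → ℕ∞} (hf : ∀ t : ℕ, MeasurableSet {ω | (t : ℕ∞) < f ω}) :
    ∫⁻ ω, (f ω : ℝ≥0∞) ∂ν = ∑' t : ℕ, ν {ω | (t : ℕ∞) < f ω} := by
  have hcomp (t : ℕ) (ω : Ω) : {m : ℕ∞ | (t : ℕ∞) < m}.indicator 1 (f ω) =
      {ω | (t : ℕ∞) < f ω}.indicator (1 : Ω → ℝ≥0∞) ω :=
    (Set.indicator_comp_right f).symm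
  simp_rw [ENat.toENNReal_eq_tsum_indicator, hcomp]
  rw [lintegral_tsum fun t => (measurable_one.indicator (hf t)).aemeasurable]
  exact tsum_congr fun t => lintegral_indicator_one (hf t)

lemma ENNReal.tsum_le_ofReal_div_of_mul_le_sub {a : ℕ → ℝ≥0∞} (ha : ∀ t, a t ≠ ∞) {w : ℕ → ℝ}
    (hw : ∀ n, 0 ≤ w n) {δ : ℝ} (hδ : 0 < δ) (h : ∀ t, δ * (a t).toReal ≤ w t - w (t + 1)) :
    ∑' t, a t ≤ ENNReal.ofReal (w 0 / δ) := by
  refine ENNReal.tsum_le_of_sum_range_le fun n => ?_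
  have hsum : δ * ∑ t ∈ Finset.range n, (a t).toReal ≤ w 0 := by
    rw [Finset.mul_sum]
    calc ∑ t ∈ Finset.range n, δ * (a t).toReal
        ≤ ∑ t ∈ Finset.range n, (w t - w (t + 1)) := Finset.sum_le_sum fun t _ => h t
      _ = w 0 - w n := Finset.sum_range_sub' w n
      _ ≤ w 0 := sub_le_self _ (hw n)
  rw [← ENNReal.ofReal_toReal (ENNReal.sum_ne_top.2 fun t _ => ha t),
    ENNReal.toReal_sum fun t _ => ha t]
  exact ENNReal.ofReal_le_ofReal ((le_div_iff₀' hδ).2 hsum)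

section natSigma

variable {Ω : Type*} [mΩ : MeasurableSpace Ω] {X : ℕ → Ω → ℝ}

lemma comap_le_natSigma {s t : ℕ} (hst : s ≤ t) :
    MeasurableSpace.comap (X s) inferInstance ≤ natSigma X t :=
  le_iSup₂ (f := fun s (_ : s ∈ Finset.range (t + 1)) =>
    MeasurableSpace.comap (X s) inferInstance) s (Finset.mem_range.2 (Nat.lt_succ_of_le hst))

lemma measurable_natSigma {s t : ℕ} (hst : s ≤ t) : Measurable[natSigma X t] (X s) :=
  (comap_measurable (X s)).mono (comap_le_natSigma hst) le_rfl

lemma natSigma_mono : Monotone (natSigma X) := fun _ _ hst =>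
  iSup₂_le fun _ hr => comap_le_natSigma (Nat.le_of_lt_succ (Finset.mem_range.1 hr) |>.trans hst)

lemma natSigma_zero : natSigma X 0 = MeasurableSpace.comap (X 0) inferInstance :=
  le_antisymm
    (iSup₂_le fun s hs => by rw [Finset.mem_range, Nat.lt_one_iff] at hs; rw [hs])
    (comap_le_natSigma le_rfl)

lemma natSigma_le (hX : ∀ t, Measurable (X t)) (t : ℕ) : natSigma X t ≤ mΩ :=
  iSup₂_le fun s _ => (hX s).comap_le

end natSigma

section relativeDecrease

variable {Ω : Type*} {m mΩ : MeasurableSpace Ω} {μ : Measure Ω} {E : Set Ω} {Y Y' : Ω → ℝ}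
  {a : ℝ}

lemma norm_indicator_inv_le (ha : 0 < a) (hYE : ∀ ω ∈ E, a ≤ Y ω) (ω : Ω) :
    ‖E.indicator (fun ω => (Y ω)⁻¹) ω‖ ≤ a⁻¹ := by
  by_cases h : ω ∈ E
  · rw [Set.indicator_of_mem h, norm_inv, Real.norm_of_nonneg (ha.le.trans (hYE ω h))]
    exact inv_anti₀ ha (hYE ω h)
  · rw [Set.indicator_of_notMem h, norm_zero]
    positivity

lemma indicator_one_sub_div_eq_indicator_inv_mul (ha : 0 < a) (hYE : ∀ ω ∈ E, a ≤ Y ω) :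
    E.indicator (fun ω => 1 - Y' ω / Y ω) = E.indicator (fun ω => (Y ω)⁻¹) * (Y - Y') := by
  ext ω
  by_cases h : ω ∈ E
  · have := (ha.trans_le (hYE ω h)).ne'
    simp only [Set.indicator_of_mem h, Pi.mul_apply, Pi.sub_apply]
    field_simp
  · simp [h]

lemma integrable_indicator_one_sub_div (hYint : Integrable Y μ) (hY'int : Integrable Y' μ)
    (hE : MeasurableSet E) (hY : Measurable Y) (ha : 0 < a) (hYE : ∀ ω ∈ E, a ≤ Y ω) :
    Integrable (E.indicator fun ω => 1 - Y' ω / Y ω) μ := by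
  rw [indicator_one_sub_div_eq_indicator_inv_mul ha hYE]
  exact ((hYint.sub hY'int).norm.const_mul a⁻¹).mono'
    ((hY.inv.indicator hE).aestronglyMeasurable.mul (hYint.sub hY'int).aestronglyMeasurable)
    (ae_of_all _ fun ω => by
      rw [Pi.mul_apply, norm_mul]
      exact mul_le_mul_of_nonneg_right (norm_indicator_inv_le ha hYE ω) (norm_nonneg _))

lemma condExp_indicator_one_sub_div (hm : m ≤ mΩ) [IsFiniteMeasure μ] (hE : MeasurableSet[m] E)
    (hY : StronglyMeasurable[m] Y) (hYint : Integrable Y μ) (hY'int : Integrable Y' μ)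
    (ha : 0 < a) (hYE : ∀ ω ∈ E, a ≤ Y ω) :
    μ[E.indicator (fun ω => 1 - Y' ω / Y ω) | m] =ᵐ[μ]
      E.indicator (fun ω => 1 - μ[Y' | m] ω / Y ω) := by
  rw [indicator_one_sub_div_eq_indicator_inv_mul ha hYE,
    indicator_one_sub_div_eq_indicator_inv_mul ha hYE]
  filter_upwards [condExp_stronglyMeasurable_mul_of_bound (f := E.indicator fun ω => (Y ω)⁻¹)
    hm (hY.measurable.inv.indicator hE).stronglyMeasurable (hYint.sub hY'int) a⁻¹
    (ae_of_all _ (norm_indicator_inv_le ha hYE)), condExp_sub hYint hY'int m] with ω h1 h2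
  rw [h1, Pi.mul_apply, h2, condExp_of_stronglyMeasurable hm hY hYint]
  rfl

lemma indicator_le_condExp_of_one_sub_div_le (hm : m ≤ mΩ) [IsFiniteMeasure μ]
    (hE : MeasurableSet[m] E) {g : Ω → ℝ} (hY : StronglyMeasurable[m] Y)
    (hYint : Integrable Y μ) (hY'int : Integrable Y' μ) (hgint : Integrable g μ) {δ : ℝ}
    (ha : 0 < a) (hYE : ∀ ω ∈ E, a ≤ Y ω)
    (hdrift : ∀ᵐ ω ∂μ, ω ∈ E → δ * Y ω ≤ Y ω - μ[Y' | m] ω)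
    (hg : ∀ᵐ ω ∂μ, E.indicator (fun ω => 1 - Y' ω / Y ω) ω ≤ g ω) :
    E.indicator (fun _ => δ) ≤ᵐ[μ] μ[g | m] := by
  have hint := integrable_indicator_one_sub_div hYint hY'int (hm _ hE)
    (hY.measurable.mono hm le_rfl) ha hYE
  filter_upwards [condExp_indicator_one_sub_div hm hE hY hYint hY'int ha hYE, hdrift,
    condExp_mono hint hgint hg] with ω hcond hdrift hg
  refine le_trans ?_ (hcond ▸ hg)
  by_cases h : ω ∈ E
  · have hY0 := ha.trans_le (hYE ω h)
    rw [Set.indicator_of_mem h, Set.indicator_of_mem h, one_sub_div hY0.ne', le_div_iff₀ hY0]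
    exact hdrift h
  · simp [h]

end relativeDecrease

noncomputable def killedLogPotential {Ω : Type*} (xmin : ℝ) (X : ℕ → Ω → ℝ) (T : Ω → ℕ∞)
    (t : ℕ) : Ω → ℝ :=
  {ω | (t : ℕ∞) < T ω}.indicator fun ω => logPotential xmin (X t ω)

section hittingTime

variable {Ω : Type*} {X : ℕ → Ω → ℝ} {xmin : ℝ} {T : Ω → ℕ∞}

lemma coe_lt_iff_forall_le_of_eq_sInf
    (hT : ∀ ω, T ω = sInf ((fun n : ℕ => (n : ℕ∞)) '' {t : ℕ | X t ω < xmin})) (t : ℕ) (ω : Ω) :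
    (t : ℕ∞) < T ω ↔ ∀ s ≤ t, xmin ≤ X s ω := by
  rw [hT, ENat.coe_lt_sInf_image_coe_iff]
  refine forall_congr' fun s => ?_
  rw [Set.mem_ofPred_eq, ← not_le, ← not_lt (b := s)]
  exact not_imp_comm

lemma killedLogPotential_nonneg (hxmin : 0 < xmin) (t : ℕ) (ω : Ω) :
    0 ≤ killedLogPotential xmin X T t ω :=
  Set.indicator_nonneg (fun _ _ => logPotential_nonneg hxmin _) ω

lemma killedLogPotential_le (hxmin : 0 < xmin) (t : ℕ) (ω : Ω) :
    killedLogPotential xmin X T t ω ≤ logPotential xmin (X t ω) :=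
  Set.indicator_le_self' (fun _ _ => logPotential_nonneg hxmin _) ω

lemma indicator_one_sub_div_le_killedLogPotential_sub (hxmin : 0 < xmin)
    (hT : ∀ (t : ℕ) ω, (t : ℕ∞) < T ω ↔ ∀ s ≤ t, xmin ≤ X s ω) {t : ℕ} {ω : Ω}
    (hnext : ((t + 1 : ℕ) : ℕ∞) ≤ T ω → 0 ≤ X (t + 1) ω) :
    {ω | (t : ℕ∞) < T ω}.indicator (fun ω => 1 - X (t + 1) ω / X t ω) ω ≤
      killedLogPotential xmin X T t ω - killedLogPotential xmin X T (t + 1) ω := by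
  by_cases h : ω ∈ {ω | (t : ℕ∞) < T ω}
  · have hXt : xmin ≤ X t ω := (hT t ω).1 h t le_rfl
    have hXnext : 0 ≤ X (t + 1) ω := hnext (by push_cast; exact Order.add_one_le_of_lt h)
    rw [Set.indicator_of_mem h, killedLogPotential, Set.indicator_of_mem h]
    linarith [one_sub_div_le_logPotential_sub hxmin hXt hXnext,
      killedLogPotential_le (X := X) (T := T) hxmin (t + 1) ω]
  · have h' : ω ∉ {ω | ((t + 1 : ℕ) : ℕ∞) < T ω} := fun h' =>
      h <| show (t : ℕ∞) < T ω from (Nat.cast_lt.2 (Nat.lt_add_one t)).trans h'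
    simp only [killedLogPotential, Set.indicator_of_notMem h, Set.indicator_of_notMem h',
      sub_zero, le_refl]

end hittingTime

section measurability

variable {Ω : Type*} [MeasurableSpace Ω] {μ : Measure Ω} {X : ℕ → Ω → ℝ} {xmin : ℝ}
  {T : Ω → ℕ∞}

lemma measurableSet_natSigma_coe_lt
    (hT : ∀ (t : ℕ) ω, (t : ℕ∞) < T ω ↔ ∀ s ≤ t, xmin ≤ X s ω) (t : ℕ) :
    MeasurableSet[natSigma X t] {ω | (t : ℕ∞) < T ω} := by
  simp_rw [hT t, Set.ofPred_forall]
  exact .iInter fun s => .iInter fun hs => measurable_natSigma hs measurableSet_Ici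

lemma stronglyMeasurable_killedLogPotential
    (hT : ∀ (t : ℕ) ω, (t : ℕ∞) < T ω ↔ ∀ s ≤ t, xmin ≤ X s ω) (t : ℕ) :
    StronglyMeasurable[natSigma X t] (killedLogPotential xmin X T t) :=
  (((measurable_logPotential xmin).comp (measurable_natSigma le_rfl)).indicator
    (measurableSet_natSigma_coe_lt hT t)).stronglyMeasurable

lemma integrable_killedLogPotential (hX : ∀ t, Measurable (X t))
    (hXint : ∀ t, Integrable (X t) μ) (hxmin : 0 < xmin)
    (hT : ∀ (t : ℕ) ω, (t : ℕ∞) < T ω ↔ ∀ s ≤ t, xmin ≤ X s ω) (t : ℕ) :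
    Integrable (killedLogPotential xmin X T t) μ :=
  ((hXint t).abs.div_const xmin).mono'
    ((stronglyMeasurable_killedLogPotential hT t).mono (natSigma_le hX t)).aestronglyMeasurable
    (ae_of_all _ fun ω => by
      rw [Real.norm_of_nonneg (killedLogPotential_nonneg hxmin t ω)]
      exact (killedLogPotential_le hxmin t ω).trans (logPotential_le_abs_div hxmin _))

end measurability

section drift

variable {Ω : Type*} [MeasurableSpace Ω] {μ : Measure Ω} [IsFiniteMeasure μ]
  {X : ℕ → Ω → ℝ} {xmin δ : ℝ} {T : Ω → ℕ∞}

lemma indicator_le_condExp_killedLogPotential_sub (hX : ∀ t, Measurable (X t))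
    (hXint : ∀ t, Integrable (X t) μ) (hxmin : 0 < xmin)
    (hT : ∀ (t : ℕ) ω, (t : ℕ∞) < T ω ↔ ∀ s ≤ t, xmin ≤ X s ω) {t : ℕ}
    (hnonneg : ∀ᵐ ω ∂μ, ((t + 1 : ℕ) : ℕ∞) ≤ T ω → 0 ≤ X (t + 1) ω)
    (hdrift : ∀ᵐ ω ∂μ, (t : ℕ∞) < T ω → δ * X t ω ≤ X t ω - μ[X (t + 1) | natSigma X t] ω) :
    {ω | (t : ℕ∞) < T ω}.indicator (fun _ => δ) ≤ᵐ[μ]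
      μ[killedLogPotential xmin X T t - killedLogPotential xmin X T (t + 1) | natSigma X t] :=
  indicator_le_condExp_of_one_sub_div_le (natSigma_le hX t) (measurableSet_natSigma_coe_lt hT t)
    (measurable_natSigma le_rfl).stronglyMeasurable (hXint t) (hXint (t + 1))
    ((integrable_killedLogPotential hX hXint hxmin hT t).sub
      (integrable_killedLogPotential hX hXint hxmin hT (t + 1)))
    hxmin (fun ω h => (hT t ω).1 h t le_rfl) hdrift
    (hnonneg.mono fun _ h => indicator_one_sub_div_le_killedLogPotential_sub hxmin hT h)

lemma smul_condExp_le_condExp_killedLogPotential_sub (hX : ∀ t, Measurable (X t))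
    (hXint : ∀ t, Integrable (X t) μ) (hxmin : 0 < xmin)
    (hT : ∀ (t : ℕ) ω, (t : ℕ∞) < T ω ↔ ∀ s ≤ t, xmin ≤ X s ω) {t : ℕ}
    (hnonneg : ∀ᵐ ω ∂μ, ((t + 1 : ℕ) : ℕ∞) ≤ T ω → 0 ≤ X (t + 1) ω)
    (hdrift : ∀ᵐ ω ∂μ, (t : ℕ∞) < T ω → δ * X t ω ≤ X t ω - μ[X (t + 1) | natSigma X t] ω) :
    δ • μ⟦{ω | (t : ℕ∞) < T ω} | natSigma X 0⟧ ≤ᵐ[μ]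
      μ[killedLogPotential xmin X T t | natSigma X 0] -
        μ[killedLogPotential xmin X T (t + 1) | natSigma X 0] := by
  have hE := natSigma_le hX t _ (measurableSet_natSigma_coe_lt hT t)
  have hZint := integrable_killedLogPotential hX hXint hxmin hT (T := T)
  have hsmul : δ • {ω | (t : ℕ∞) < T ω}.indicator (fun _ => (1 : ℝ)) =
      {ω | (t : ℕ∞) < T ω}.indicator (fun _ => δ) := by
    ext ω
    by_cases h : ω ∈ {ω | (t : ℕ∞) < T ω} <;> simp [h]
  calc δ • μ⟦{ω | (t : ℕ∞) < T ω} | natSigma X 0⟧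
      =ᵐ[μ] μ[{ω | (t : ℕ∞) < T ω}.indicator (fun _ => δ) | natSigma X 0] := by
        rw [← hsmul]
        exact (condExp_smul _ _ _).symm
    _ ≤ᵐ[μ] μ[μ[killedLogPotential xmin X T t - killedLogPotential xmin X T (t + 1) |
          natSigma X t] | natSigma X 0] :=
        condExp_mono ((integrable_const δ).indicator hE) integrable_condExp
          (indicator_le_condExp_killedLogPotential_sub hX hXint hxmin hT hnonneg hdrift)
    _ =ᵐ[μ] μ[killedLogPotential xmin X T t - killedLogPotential xmin X T (t + 1) |
          natSigma X 0] :=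
        condExp_condExp_of_le (natSigma_mono (Nat.zero_le t)) (natSigma_le hX t)
    _ =ᵐ[μ] _ := condExp_sub (hZint t) (hZint (t + 1)) _

end drift

theorem upper_multiplicative_drift_unbounded_below_target_general
    {Ω : Type*} [MeasurableSpace Ω] [StandardBorelSpace Ω]
    (μ : Measure Ω) [IsProbabilityMeasure μ]
    (X : ℕ → Ω → ℝ) (hXmeas : ∀ t, Measurable (X t)) (hXint : ∀ t, Integrable (X t) μ)
    (xmin : ℝ) (hxmin : 0 < xmin)
    (T : Ω → ℕ∞)
    (hT : ∀ ω, T ω = sInf ((fun n : ℕ => (n : ℕ∞)) '' {t : ℕ | X t ω < xmin}))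
    (δ : ℝ) (hδ : 0 < δ)
    (hnonneg : ∀ t : ℕ, ∀ᵐ ω ∂μ, (t : ℕ∞) ≤ T ω → 0 ≤ X t ω)
    (hdrift : ∀ t : ℕ, ∀ᵐ ω ∂μ, (t : ℕ∞) < T ω →
      δ * X t ω ≤ X t ω - (μ[X (t + 1) | natSigma X t]) ω) :
    ∀ᵐ ω ∂μ,
      (∫⁻ ω', (T ω' : ℝ≥0∞) ∂(condExpKernel μ (MeasurableSpace.comap (X 0) inferInstance) ω))
        ≤ ENNReal.ofReal ((1 + Real.log (X 0 ω / xmin)) / δ) := by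
  rw [← natSigma_zero]
  have hTX := coe_lt_iff_forall_le_of_eq_sInf hT
  have hF0 := natSigma_le hXmeas 0
  have hE (t : ℕ) : MeasurableSet {ω | (t : ℕ∞) < T ω} :=
    natSigma_le hXmeas t _ (measurableSet_natSigma_coe_lt hTX t)
  set W : ℕ → Ω → ℝ := fun t => μ[killedLogPotential xmin X T t | natSigma X 0]
  have hW_decr (t : ℕ) : ∀ᵐ ω ∂μ,
      δ * ((condExpKernel μ (natSigma X 0) ω) {ω | (t : ℕ∞) < T ω}).toReal ≤
        W t ω - W (t + 1) ω := by
    filter_upwards [condExpKernel_ae_eq_condExp hF0 (hE t),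
      smul_condExp_le_condExp_killedLogPotential_sub hXmeas hXint hxmin hTX (hnonneg (t + 1))
        (hdrift t)] with ω hκ hZ
    rw [← measureReal_def, hκ]
    exact hZ
  have hW_nonneg (t : ℕ) : 0 ≤ᵐ[μ] W t :=
    condExp_nonneg (ae_of_all _ (killedLogPotential_nonneg hxmin t))
  have hW_zero : W 0 = killedLogPotential xmin X T 0 :=
    condExp_of_stronglyMeasurable hF0 (stronglyMeasurable_killedLogPotential hTX 0)
      (integrable_killedLogPotential hXmeas hXint hxmin hTX 0)
  filter_upwards [ae_all_iff.2 hW_decr, ae_all_iff.2 hW_nonneg] with ω hW_decr hW_nonneg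
  rw [lintegral_toENNReal_eq_tsum_measure _ hE]
  calc _ ≤ ENNReal.ofReal (W 0 ω / δ) :=
        ENNReal.tsum_le_ofReal_div_of_mul_le_sub (fun _ => measure_ne_top _ _) hW_nonneg hδ
          hW_decr
    _ ≤ ENNReal.ofReal (logPotential xmin (X 0 ω) / δ) := by
        gcongr
        rw [hW_zero]
        exact killedLogPotential_le hxmin 0 ω
    _ ≤ _ := ofReal_logPotential_div_le _ _

/-- **Upper Multiplicative Drift, Unbounded, Below Target.** -/
theorem upper_multiplicative_drift_unbounded_below_target
    {Ω : Type*} [MeasurableSpace Ω] [StandardBorelSpace Ω]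
    (μ : Measure Ω) [IsProbabilityMeasure μ]
    (X : ℕ → Ω → ℝ) (hXmeas : ∀ t, Measurable (X t)) (hXint : ∀ t, Integrable (X t) μ)
    (xmin : ℝ) (hxmin : 0 < xmin)
    (T : Ω → ℕ∞)
    (hT : ∀ ω, T ω = sInf ((fun n : ℕ => (n : ℕ∞)) '' {t : ℕ | X t ω < xmin}))
    (δ : ℝ) (hδ : 0 < δ)
    (hstart : ∀ᵐ ω ∂μ, xmin ≤ X 0 ω)
    (hnonneg : ∀ t : ℕ, ∀ᵐ ω ∂μ, (t : ℕ∞) ≤ T ω → 0 ≤ X t ω)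
    (hdrift : ∀ t : ℕ, ∀ᵐ ω ∂μ, (t : ℕ∞) < T ω →
      δ * X t ω ≤ X t ω - (μ[X (t + 1) | natSigma X t]) ω) :
    ∀ᵐ ω ∂μ,
      (∫⁻ ω', (T ω' : ℝ≥0∞) ∂(condExpKernel μ (MeasurableSpace.comap (X 0) inferInstance) ω))
        ≤ ENNReal.ofReal ((1 + Real.log (X 0 ω / xmin)) / δ) :=
  upper_multiplicative_drift_unbounded_below_target_general μ X hXmeas hXint xmin hxmin T hT δ hδ
    hnonneg hdrift
end
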